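/- arXiv:1705.07514 — 3 statements merged into one kernel-verified Lean document; each statement's English description precedes it below -/
import Mathlib

section
/- Let n ≥ 3 be an odd integer and let λ ∈ ℚ with λ ≠ 0 and λ ≠ 1. Let L̃ₙ be the number field obtained from the splitting field Lₙ of Xⁿ − X − 1 over ℚ by adjoining a square root of u + λ for every root u of Xⁿ − X − 1. Then for every root u ∈ Lₙ of Xⁿ − X − 1 and every t ∈ L̃ₙ with t² = u + λ, the pair (u, u^((n+1)/2)·t) is an L̃ₙ-rational point on the Legendre curve E_λ : Y² = X(X+1)(X+λ), i.e. (u^((n+1)/2)·t)² = u·(u+1)·(u+λ). -/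
open Polynomial

/-- `Lₙ`, the splitting field of `Xⁿ - X - 1` over `ℚ`. -/
noncomputable abbrev Lfield (n : ℕ) : Type :=
  ((X : ℚ[X]) ^ n - X - 1).SplittingField

/-- The polynomial `∏ᵤ (X² - (u + λ))` over `Lₙ`, the product ranging over the roots `u`
of `Xⁿ - X - 1` in `Lₙ`. -/
noncomputable abbrev sqrtPoly (n : ℕ) (lam : ℚ) : (Lfield n)[X] :=
  ((((X : ℚ[X]) ^ n - X - 1).aroots (Lfield n)).map
    (fun u => (X : (Lfield n)[X]) ^ 2 - C (u + algebraMap ℚ (Lfield n) lam))).prod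

/-- `L̃ₙ`, the smallest extension of `Lₙ` containing a square root of `u + λ` for every
root `u` of `Xⁿ - X - 1`: the splitting field of `∏ᵤ (X² - (u + λ))` over `Lₙ`. -/
noncomputable abbrev Ltilde (n : ℕ) (lam : ℚ) : Type :=
  (sqrtPoly n lam).SplittingField

/-- The Legendre curve `E_λ : Y² = X(X+1)(X+λ)` as an affine Weierstrass curve,
i.e. `Y² = X³ + (1+λ)X² + λX`. -/
noncomputable def Legendre {F : Type*} [CommRing F] (lam : F) : WeierstrassCurve.Affine F :=
  { a₁ := 0, a₂ := 1 + lam, a₃ := 0, a₄ := lam, a₆ := 0 }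

/-- For any odd `n ≥ 3`, any `λ ∈ ℚ` with `λ ≠ 0, 1`, any root `u ∈ Lₙ` of `Xⁿ - X - 1` and
any `t ∈ L̃ₙ` with `t² = u + λ`, the pair `(u, u^((n+1)/2)·t)` is an `L̃ₙ`-rational point on
the Legendre curve `E_λ : Y² = X(X+1)(X+λ)`, i.e. `(u^((n+1)/2)·t)² = u(u+1)(u+λ)`. -/
theorem legendre_point (n : ℕ) (hn : 3 ≤ n) (hodd : Odd n)
    (lam : ℚ) (hlam0 : lam ≠ 0) (hlam1 : lam ≠ 1)
    (u : Lfield n) (hu : u ^ n - u - 1 = 0)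
    (t : Ltilde n lam)
    (ht : t ^ 2 = algebraMap (Lfield n) (Ltilde n lam) u + algebraMap ℚ (Ltilde n lam) lam) :
    (Legendre (algebraMap ℚ (Ltilde n lam) lam)).Equation
        (algebraMap (Lfield n) (Ltilde n lam) u)
        ((algebraMap (Lfield n) (Ltilde n lam) u) ^ ((n + 1) / 2) * t) ∧
      ((algebraMap (Lfield n) (Ltilde n lam) u) ^ ((n + 1) / 2) * t) ^ 2 =
        algebraMap (Lfield n) (Ltilde n lam) u *
          (algebraMap (Lfield n) (Ltilde n lam) u + 1) *
          (algebraMap (Lfield n) (Ltilde n lam) u + algebraMap ℚ (Ltilde n lam) lam) := by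

  set v := algebraMap (Lfield n) (Ltilde n lam) u with hvdef
  set l := algebraMap ℚ (Ltilde n lam) lam with hldef
  have hv : v ^ n = v + 1 := by
    have := congrArg (algebraMap (Lfield n) (Ltilde n lam)) hu
    simp only [map_sub, map_pow, map_one, map_zero] at this
    linear_combination this
  obtain ⟨k, hk⟩ := hodd
  have hdiv : (n + 1) / 2 = k + 1 := by omega
  have hkey : (v ^ ((n + 1) / 2) * t) ^ 2 = v * (v + 1) * (v + l) := by
    rw [hdiv, mul_pow, ht, ← pow_mul]
    have : (k + 1) * 2 = n + 1 := by omega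
    rw [this, pow_succ, hv]
    ring
  refine ⟨?_, hkey⟩
  rw [WeierstrassCurve.Affine.equation_iff]
  simp only [Legendre]
  linear_combination hkey
end

section
/- For every odd integer n ≥ 3 there is a surjective homomorphism of ℤ-algebras from ℤ[λ, X, Y]/(Y² − X(X+1)(X+λ)) to ℤ[λ, U, T]/(Uⁿ − U − 1, T² − (U + λ)) determined by λ ↦ λ, X ↦ U, and Y ↦ U^((n+1)/2)·T. -/
open MvPolynomial

set_option maxHeartbeats 1000000

/-- The ring `ℤ[λ, X, Y]/(Y² - X(X+1)(X+λ))`, where `λ, X, Y` are the variables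
`X 0, X 1, X 2` of `MvPolynomial (Fin 3) ℤ`. -/
noncomputable abbrev LegendreRing : Type :=
  MvPolynomial (Fin 3) ℤ ⧸ (Ideal.span
    {(X 2 : MvPolynomial (Fin 3) ℤ) ^ 2 - X 1 * (X 1 + 1) * (X 1 + X 0)})

/-- The ring `ℤ[λ, U, T]/(Uⁿ - U - 1, T² - (U + λ))`, where `λ, U, T` are the variables
`X 0, X 1, X 2` of `MvPolynomial (Fin 3) ℤ`. -/
noncomputable abbrev TrinomialRing (n : ℕ) : Type :=
  MvPolynomial (Fin 3) ℤ ⧸ (Ideal.span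
    {(X 1 : MvPolynomial (Fin 3) ℤ) ^ n - X 1 - 1,
     (X 2 : MvPolynomial (Fin 3) ℤ) ^ 2 - (X 1 + X 0)})

/-- For every odd integer `n ≥ 3`, there is a surjective homomorphism of `ℤ`-algebras
`ℤ[λ, X, Y]/(Y² - X(X+1)(X+λ)) → ℤ[λ, U, T]/(Uⁿ - U - 1, T² - (U + λ))` determined by
`λ ↦ λ`, `X ↦ U`, and `Y ↦ U^((n+1)/2)·T`. -/
theorem legendre_to_trinomial_surjective (n : ℕ) (hn : 3 ≤ n) (hodd : Odd n) :
    ∃ f : LegendreRing →ₐ[ℤ] TrinomialRing n,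
      Function.Surjective f ∧
      f (Ideal.Quotient.mk _ (X 0)) = Ideal.Quotient.mk _ (X 0) ∧
      f (Ideal.Quotient.mk _ (X 1)) = Ideal.Quotient.mk _ (X 1) ∧
      f (Ideal.Quotient.mk _ (X 2)) =
        Ideal.Quotient.mk _ (X 1) ^ ((n + 1) / 2) * Ideal.Quotient.mk _ (X 2) := by
  set m := (n + 1) / 2 with hmdef
  have hm : m * 2 = n + 1 := by
    rw [Nat.odd_iff] at hodd; omega
  set J : Ideal (MvPolynomial (Fin 3) ℤ) := Ideal.span
    {(X 1 : MvPolynomial (Fin 3) ℤ) ^ n - X 1 - 1,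
     (X 2 : MvPolynomial (Fin 3) ℤ) ^ 2 - (X 1 + X 0)} with hJ
  set q : MvPolynomial (Fin 3) ℤ →+* TrinomialRing n := Ideal.Quotient.mk J with hq
  have hU : q (X 1) ^ n = q (X 1) + 1 := by
    have : q ((X 1 : MvPolynomial (Fin 3) ℤ) ^ n - X 1 - 1) = 0 := by
      rw [Ideal.Quotient.eq_zero_iff_mem]
      exact Ideal.subset_span (by simp)
    simp only [map_sub, map_pow, map_one] at this
    linear_combination this
  have hT : q (X 2) ^ 2 = q (X 1) + q (X 0) := by
    have : q ((X 2 : MvPolynomial (Fin 3) ℤ) ^ 2 - (X 1 + X 0)) = 0 := by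
      rw [Ideal.Quotient.eq_zero_iff_mem]
      exact Ideal.subset_span (by simp)
    simp only [map_sub, map_pow, map_add] at this
    linear_combination this
  set g : MvPolynomial (Fin 3) ℤ →ₐ[ℤ] TrinomialRing n :=
    aeval ![q (X 0), q (X 1), q (X 1) ^ m * q (X 2)] with hg
  have hg0 : g (X 0) = q (X 0) := by simp [hg]
  have hg1 : g (X 1) = q (X 1) := by simp [hg]
  have hg2 : g (X 2) = q (X 1) ^ m * q (X 2) := by simp [hg]
  have hrel : g ((X 2 : MvPolynomial (Fin 3) ℤ) ^ 2 - X 1 * (X 1 + 1) * (X 1 + X 0)) = 0 := by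
    simp only [map_sub, map_pow, map_mul, map_add, map_one, hg0, hg1, hg2]
    have hUT : (q (X 1) ^ m * q (X 2)) ^ 2 =
        q (X 1) * (q (X 1) + 1) * (q (X 1) + q (X 0)) := by
      calc (q (X 1) ^ m * q (X 2)) ^ 2 = q (X 1) ^ (m * 2) * q (X 2) ^ 2 := by
            rw [mul_pow, ← pow_mul]
        _ = q (X 1) ^ n * q (X 1) * (q (X 1) + q (X 0)) := by rw [hm, hT]; ring
        _ = q (X 1) * (q (X 1) + 1) * (q (X 1) + q (X 0)) := by rw [hU]; ring
    linear_combination hUT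
  set f : LegendreRing →ₐ[ℤ] TrinomialRing n :=
    Ideal.Quotient.liftₐ _ g (by
      intro a ha
      rw [Ideal.mem_span_singleton'] at ha
      obtain ⟨c, rfl⟩ := ha
      rw [map_mul, hrel, mul_zero]) with hf
  have hfmk : ∀ p, f (Ideal.Quotient.mk _ p) = g p := fun p => Ideal.Quotient.liftₐ_apply _ _ _ _
  refine ⟨f, ?_, by rw [hfmk, hg0], by rw [hfmk, hg1], by rw [hfmk, hg2]⟩
  have hunit : (q (X 1) ^ (n - 1) - 1) * q (X 1) = 1 := by
    have h1 : q (X 1) ^ (n - 1) * q (X 1) = q (X 1) ^ n := by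
      rw [← pow_succ]; congr 1; omega
    linear_combination h1 + hU
  have hr2 : q (X 2) ∈ f.range := by
    refine ⟨Ideal.Quotient.mk _ ((X 1 ^ (n - 1) - 1) ^ m * X 2), ?_⟩
    show f (Ideal.Quotient.mk _ ((X 1 ^ (n - 1) - 1) ^ m * X 2)) = q (X 2)
    rw [hfmk, map_mul, map_pow, map_sub, map_one, map_pow, hg1, hg2]
    calc (q (X 1) ^ (n - 1) - 1) ^ m * (q (X 1) ^ m * q (X 2))
        = ((q (X 1) ^ (n - 1) - 1) * q (X 1)) ^ m * q (X 2) := by rw [mul_pow, mul_assoc]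
      _ = q (X 2) := by rw [hunit, one_pow, one_mul]
  have hrX : ∀ i : Fin 3, q (X i) ∈ f.range := by
    intro i
    fin_cases i
    · exact ⟨Ideal.Quotient.mk _ (X 0), by
        show f (Ideal.Quotient.mk _ (X 0)) = q (X 0); rw [hfmk, hg0]⟩
    · exact ⟨Ideal.Quotient.mk _ (X 1), by
        show f (Ideal.Quotient.mk _ (X 1)) = q (X 1); rw [hfmk, hg1]⟩
    · exact hr2
  intro y
  obtain ⟨p, rfl⟩ := Ideal.Quotient.mk_surjective y
  show (Ideal.Quotient.mk J p) ∈ Set.range f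
  rw [← AlgHom.coe_range f]
  induction p using MvPolynomial.induction_on with
  | C a =>
      have : (Ideal.Quotient.mk J) (C a) = algebraMap ℤ (TrinomialRing n) a := rfl
      rw [this]; exact Subalgebra.algebraMap_mem _ a
  | add p1 p2 h1 h2 => rw [map_add]; exact add_mem h1 h2
  | mul_X p i h => rw [map_mul]; exact mul_mem h (hrX i)
end

section
/- Let R be a commutative ring with unity and let n ≥ 3 be an odd integer. Suppose λ ∈ R, u ∈ R satisfies uⁿ = u + 1, and t ∈ R satisfies t² = u + λ. Then the pair (x, y) = (u, u^((n+1)/2)·t) satisfies the Legendre equation y² = x(x+1)(x+λ) in R. -/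
/-- Let `R` be a commutative ring with unity, `n ≥ 3` an odd integer, `λ ∈ R`, `u ∈ R` with
`uⁿ = u + 1`, and `t ∈ R` with `t² = u + λ`. Then `(x, y) = (u, u^((n+1)/2)·t)` satisfies the
Legendre equation `y² = x(x+1)(x+λ)` in `R`. -/
theorem legendre_equation_universal {R : Type*} [CommRing R] (n : ℕ) (hn : 3 ≤ n)
    (hodd : Odd n) (lam u t : R) (hu : u ^ n = u + 1) (ht : t ^ 2 = u + lam) :
    (u ^ ((n + 1) / 2) * t) ^ 2 = u * (u + 1) * (u + lam) := by
  obtain ⟨k, hk⟩ := hodd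
  subst hk
  have h2 : (2 * k + 1 + 1) / 2 = k + 1 := by omega
  rw [h2, mul_pow, ht, ← pow_mul]
  have : u ^ ((k + 1) * 2) = u * u ^ (2 * k + 1) := by ring
  rw [this, hu]
end
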